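/- arXiv:1609.00195 — 5 statements merged into one kernel-verified Lean document; each statement's English description precedes it below -/
import Mathlib

section
/- For a fixed initial state σ₀, the set of Aczel traces starting from σ₀ forms a complete lattice under the trace refinement ordering, with least element (σ₀, [π(⊥)]) and greatest element (σ₀, []). -/
namespace Aczel

/-- Atomic steps: program step, environment step (with `none` denoting the
undefined/bottom state `⊥`), or termination marker `✓`. -/
inductive Step (S : Type) where
  | prog : Option S → Step S
  | env  : Option S → Step S
  | term : Step S

/-- Terminal steps `π(⊥)`, `ε(⊥)`, `✓` may occur only last in a trace. -/
def Step.isTerminal {S : Type} : Step S → Prop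
  | .prog none => True
  | .env none  => True
  | .term      => True
  | _          => False

/-- Possibly infinite sequences of steps, as partial functions on ℕ. -/
abbrev RawSeq (S : Type) := ℕ → Option (Step S)

def emptySeq (S : Type) : RawSeq S := fun _ => none

def seq1 {S : Type} (a : Step S) : RawSeq S := fun i => if i = 0 then some a else none

def seq2 {S : Type} (a b : Step S) : RawSeq S :=
  fun i => if i = 0 then some a else if i = 1 then some b else none

/-- `SeqPrefix t₁ t₂`: `t₁` is a prefix of `t₂`. -/
def SeqPrefix {S : Type} (t₁ t₂ : RawSeq S) : Prop :=
  ∀ i s, t₁ i = some s → t₂ i = some s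

def HasLength {S : Type} (t : RawSeq S) (n : ℕ) : Prop :=
  ∀ i, (t i).isSome ↔ i < n

def SeqFinite {S : Type} (t : RawSeq S) : Prop := ∃ n, HasLength t n

/-- `SnocEq t' t x`: `t` is finite and `t' = t ++ [x]`. -/
def SnocEq {S : Type} (t' t : RawSeq S) (x : Step S) : Prop :=
  ∃ n, HasLength t n ∧ (∀ i, i < n → t' i = t i) ∧ t' n = some x ∧ HasLength t' (n + 1)

/-- An Aczel trace: an initial state together with a (finite or infinite)
sequence of steps whose domain is downward closed and in which terminal
steps occur only as the last step. -/
structure Trace (S : Type) where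
  init : S
  steps : RawSeq S
  closed : ∀ i, (steps (i + 1)).isSome → (steps i).isSome
  wf : ∀ i st, steps i = some st → st.isTerminal → steps (i + 1) = none

/-- The trace refinement ordering. -/
def TrLE {S : Type} (tr₁ tr₂ : Trace S) : Prop :=
  tr₁.init = tr₂.init ∧
    (SeqPrefix tr₂.steps tr₁.steps ∨
      ∃ t₃ : RawSeq S, SnocEq tr₁.steps t₃ (Step.prog none) ∧ SeqPrefix t₃ tr₂.steps)

def emptyTrace {S : Type} (σ : S) : Trace S :=
  ⟨σ, emptySeq S, by intro i h; simp [emptySeq] at h, by intro i st h; simp [emptySeq] at h⟩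

/-- The trace `(σ₀, [π(⊥)])`. -/
def botTrace {S : Type} (σ₀ : S) : Trace S :=
  ⟨σ₀, seq1 (Step.prog none),
    by intro i h; simp [seq1] at h,
    by intro i st h _; simp [seq1]⟩

/-- Empty closure: add all empty traces. -/
def emptyClose {S : Type} (s : Set (Trace S)) : Set (Trace S) :=
  s ∪ {tr | tr.steps = emptySeq S}

/-- Prefix closure: empty closure plus all prefixes of traces of `s`. -/
def prefixClose {S : Type} (s : Set (Trace S)) : Set (Trace S) :=
  emptyClose s ∪ {tr | ∃ tr' ∈ s, tr'.init = tr.init ∧ SeqPrefix tr.steps tr'.steps}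

/-- Aborting traces of `s`: those whose extension by `π(⊥)` is in `s`. -/
def aborting {S : Type} (s : Set (Trace S)) : Set (Trace S) :=
  {tr | ∃ tr' ∈ s, tr'.init = tr.init ∧ SnocEq tr'.steps tr.steps (Step.prog none)}

/-- All extensions of traces of `s`. -/
def abortComplete {S : Type} (s : Set (Trace S)) : Set (Trace S) :=
  {tr | ∃ tr' ∈ s, tr'.init = tr.init ∧ SeqPrefix tr'.steps tr.steps}

def abortClose {S : Type} (s : Set (Trace S)) : Set (Trace S) :=
  s ∪ abortComplete (aborting s)

/-- Commands: prefix-closed and abort-closed sets of traces. -/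
def IsCommand {S : Type} (s : Set (Trace S)) : Prop :=
  s = prefixClose s ∧ s = abortClose s

/-- Refinement: `Ref c d` means `c ⊑ d`, i.e. `c ⊇ d`. -/
def Ref {S : Type} (c d : Set (Trace S)) : Prop := d ⊆ c

/-- Atomic program step command `π(r)`. -/
def Pi {S : Type} (r : Set (S × S)) : Set (Trace S) :=
  prefixClose {tr | ∃ p ∈ r, tr.init = p.1 ∧ tr.steps = seq2 (Step.prog (some p.2)) Step.term}

/-- Atomic environment step command `ε(r)`. -/
def Eps {S : Type} (r : Set (S × S)) : Set (Trace S) :=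
  prefixClose {tr | ∃ p ∈ r, tr.init = p.1 ∧ tr.steps = seq2 (Step.env (some p.2)) Step.term}

/-- Test command `τ(p)`. -/
def test {S : Type} (p : Set S) : Set (Trace S) :=
  emptyClose {tr | tr.init ∈ p ∧ tr.steps = seq1 Step.term}

def AbortC (S : Type) : Set (Trace S) := Set.univ

def MagicC (S : Type) : Set (Trace S) := emptyClose (∅ : Set (Trace S))

def NilC (S : Type) : Set (Trace S) := test Set.univ

/-- Environment abort command `⊥_ε`. -/
def EAbortC (S : Type) : Set (Trace S) :=
  emptyClose {tr | tr.steps = seq1 (Step.env none)}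

/-- `ε⊥(r)`: environment step satisfying `r`, or environment abort. -/
def EpsBot {S : Type} (r : Set (S × S)) : Set (Trace S) := Eps r ∪ EAbortC S

/-- Binary nondeterministic choice `⊓` (union, empty closed). -/
def choice {S : Type} (c₁ c₂ : Set (Trace S)) : Set (Trace S) := emptyClose (c₁ ∪ c₂)

/-- Nondeterministic choice over a set of commands `⨅ C`. -/
def NondetInf {S : Type} (C : Set (Set (Trace S))) : Set (Trace S) := emptyClose (⋃₀ C)

/-- Terminated traces of `c`: those ending in `✓`. -/
def terminated {S : Type} (c : Set (Trace S)) : Set (Trace S) :=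
  {tr | tr ∈ c ∧ ∃ t : RawSeq S, SnocEq tr.steps t Step.term}

/-- Terminating traces of `c`, with the final `✓` removed. -/
def terminating {S : Type} (c : Set (Trace S)) : Set (Trace S) :=
  {tr | ∃ tr' ∈ c, tr'.init = tr.init ∧ SnocEq tr'.steps tr.steps Step.term}

/-- `LastState tr σ`: `σ` is the last state of the (finite) trace `tr`. -/
def LastState {S : Type} (tr : Trace S) (σ : S) : Prop :=
  (HasLength tr.steps 0 ∧ σ = tr.init) ∨
    (∃ n s, HasLength tr.steps (n + 1) ∧ tr.steps n = some s ∧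
      (s = Step.prog (some σ) ∨ s = Step.env (some σ)))

/-- Concatenation `s₁ ⌢ s₂` of matching traces. -/
def seqCat {S : Type} (s₁ s₂ : Set (Trace S)) : Set (Trace S) :=
  {tr | ∃ tr₁ ∈ s₁, ∃ tr₂ ∈ s₂, ∃ n, HasLength tr₁.steps n ∧
    LastState tr₁ tr₂.init ∧ tr.init = tr₁.init ∧
    ∀ i, tr.steps i = if i < n then tr₁.steps i else tr₂.steps (i - n)}

/-- Sequential composition `c₁ ; c₂`: the unterminated traces of `c₁`
(abort closed) together with terminating traces of `c₁` (final `✓` removed)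
concatenated with matching traces of `c₂`. -/
def seqComp {S : Type} (c₁ c₂ : Set (Trace S)) : Set (Trace S) :=
  abortClose (c₁ \ terminated c₁) ∪ seqCat (terminating c₁) c₂

/-- Precondition command `pre(p)`. -/
def preC {S : Type} (p : Set S) : Set (Trace S) :=
  choice (test p) (seqComp (test pᶜ) (AbortC S))

/-- Possibly infinite iteration `c^ω = μ x. Nil ⊓ c;x` (least fixed point
w.r.t. refinement, i.e. greatest w.r.t. `⊆`, by Knaster–Tarski). -/
def omegaIter {S : Type} (c : Set (Trace S)) : Set (Trace S) :=
  ⋃₀ {x | x ⊆ choice (NilC S) (seqComp c x)}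

/-- Guarantee command `guar(g) = (π(g) ⊓ ε⊥(⊤))^ω`. -/
def guarC {S : Type} (g : Set (S × S)) : Set (Trace S) :=
  omegaIter (choice (Pi g) (EpsBot Set.univ))

/-- Environment guard `eguar(r) = (π(⊤) ⊓ ε⊥(r))^ω`. -/
def eguarC {S : Type} (r : Set (S × S)) : Set (Trace S) :=
  omegaIter (choice (Pi Set.univ) (EpsBot r))

/-- Rely command `rely(r) = eguar(r) ; (Nil ⊓ ε(r̄) ; Abort)`. -/
def relyC {S : Type} (r : Set (S × S)) : Set (Trace S) :=
  seqComp (eguarC r) (choice (NilC S) (seqComp (Eps rᶜ) (AbortC S)))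

def abortFirst {S : Type} (c₁ c₂ : Set (Trace S)) : Set (Trace S) :=
  abortComplete (aborting c₁ ∩ c₂)

/-- Weak conjunction `c₁ ⋒ c₂`. -/
def wconj {S : Type} (c₁ c₂ : Set (Trace S)) : Set (Trace S) :=
  (c₁ ∩ c₂) ∪ abortFirst c₁ c₂ ∪ abortFirst c₂ c₁

/-! A lower bound of a set `A` of traces either extends every trace of `A`, which forces `A` to be
a chain for the prefix order, or it is `t ++ [π(⊥)]` for a finite stem `t` that is prefix-comparable
with every trace of `A`. For a chain the infimum is the union of its traces. Otherwise two
incomparable traces of `A` make the stems prefixes of both, so they form a chain of bounded length,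
and the infimum is the longest stem followed by `π(⊥)`. Suprema are infima of the set of upper
bounds. -/

section Lattice

variable {S : Type}

theorem SeqPrefix.refl (t : RawSeq S) : SeqPrefix t t := fun _ _ h => h

theorem SeqPrefix.trans {t u v : RawSeq S} (htu : SeqPrefix t u) (huv : SeqPrefix u v) :
    SeqPrefix t v :=
  fun i s hs => huv i s (htu i s hs)

theorem emptySeq_prefix (t : RawSeq S) : SeqPrefix (emptySeq S) t := by
  intro i s hs
  simp [emptySeq] at hs

theorem hasLength_emptySeq : HasLength (emptySeq S) 0 := by
  intro i
  simp [emptySeq]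

def IsDownClosed (t : RawSeq S) : Prop :=
  ∀ i, (t (i + 1)).isSome → (t i).isSome

theorem IsDownClosed.isSome_of_le {t : RawSeq S} (ht : IsDownClosed t) {i j : ℕ} (hij : i ≤ j)
    (hj : (t j).isSome) : (t i).isSome := by
  induction hij with
  | refl => exact hj
  | step _ ih => exact ih (ht _ hj)

namespace HasLength

variable {t : RawSeq S} {n : ℕ}

theorem lt_of_eq_some (h : HasLength t n) {i : ℕ} {s : Step S} (hi : t i = some s) : i < n :=
  (h i).1 (by simp [hi])

theorem exists_eq_some (h : HasLength t n) {i : ℕ} (hi : i < n) : ∃ s, t i = some s :=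
  Option.isSome_iff_exists.mp ((h i).2 hi)

theorem eq_none (h : HasLength t n) {i : ℕ} (hi : n ≤ i) : t i = none :=
  Option.not_isSome_iff_eq_none.mp fun hs => by have := (h i).1 hs; omega

theorem unique (h : HasLength t n) {m : ℕ} (hm : HasLength t m) : n = m := by
  have hn : ¬ (t n).isSome := by rw [h n]; omega
  have hm' : ¬ (t m).isSome := by rw [hm m]; omega
  rw [hm n] at hn
  rw [h m] at hm'
  omega

theorem isDownClosed (h : HasLength t n) : IsDownClosed t :=
  fun i hi => (h i).2 (by have := (h (i + 1)).1 hi; omega)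

end HasLength

theorem eq_some_of_prefix_of_prefix {t u v : RawSeq S} (htv : SeqPrefix t v)
    (huv : SeqPrefix u v) {i : ℕ} {s : Step S} (hts : t i = some s) (hu : (u i).isSome) :
    u i = some s := by
  obtain ⟨y, hy⟩ := Option.isSome_iff_exists.mp hu
  rw [hy, ← Option.some.inj ((huv i y hy).symm.trans (htv i s hts))]

theorem prefix_or_prefix_of_prefix {t u v : RawSeq S} (ht : IsDownClosed t) (hu : IsDownClosed u)
    (htv : SeqPrefix t v) (huv : SeqPrefix u v) : SeqPrefix t u ∨ SeqPrefix u t := by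
  by_contra! h
  obtain ⟨htu, hut⟩ := h
  simp only [SeqPrefix, not_forall] at htu hut
  obtain ⟨i, s, hts, hus⟩ := htu
  obtain ⟨j, x, hux, htx⟩ := hut
  rcases le_total i j with hij | hji
  · exact hus (eq_some_of_prefix_of_prefix htv huv hts (hu.isSome_of_le hij (by simp [hux])))
  · exact htx (eq_some_of_prefix_of_prefix huv htv hux (ht.isSome_of_le hji (by simp [hts])))

theorem SeqPrefix.prefix_of_length_le {t u : RawSeq S} {n m : ℕ} (htu : SeqPrefix t u)
    (ht : HasLength t n) (hu : HasLength u m) (hmn : m ≤ n) : SeqPrefix u t := by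
  intro i x hx
  obtain ⟨y, hy⟩ := ht.exists_eq_some (lt_of_lt_of_le (hu.lt_of_eq_some hx) hmn)
  rw [hy, ← Option.some.inj ((htu i y hy).symm.trans hx)]

theorem prefix_of_comparable_of_not_prefix {t u₁ u₂ : RawSeq S} (hu₁ : IsDownClosed u₁)
    (hu₂ : IsDownClosed u₂) (h₁₂ : ¬ SeqPrefix u₁ u₂) (h₂₁ : ¬ SeqPrefix u₂ u₁)
    (ht₁ : SeqPrefix t u₁ ∨ SeqPrefix u₁ t) (ht₂ : SeqPrefix t u₂ ∨ SeqPrefix u₂ t) :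
    SeqPrefix t u₁ := by
  rcases ht₁ with ht₁ | hu₁t
  · exact ht₁
  rcases ht₂ with ht₂ | hu₂t
  · exact absurd (hu₁t.trans ht₂) h₁₂
  · rcases prefix_or_prefix_of_prefix hu₁ hu₂ hu₁t hu₂t with h | h
    · exact absurd h h₁₂
    · exact absurd h h₂₁

/-- `snoc t n x` is `t ++ [x]` when `t` has length `n`. -/
def snoc (t : RawSeq S) (n : ℕ) (x : Step S) : RawSeq S :=
  fun i => if i < n then t i else if i = n then some x else none

section Snoc

variable {t : RawSeq S} {n i : ℕ} {x : Step S}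

theorem snoc_of_lt (h : i < n) : snoc t n x i = t i := by
  simp [snoc, h]

theorem snoc_self : snoc t n x n = some x := by
  simp [snoc]

theorem snoc_of_gt (h : n < i) : snoc t n x i = none := by
  simp [snoc, show ¬ i < n by omega, show i ≠ n by omega]

theorem hasLength_snoc (h : HasLength t n) : HasLength (snoc t n x) (n + 1) := by
  intro i
  rcases lt_trichotomy i n with hi | rfl | hi
  · rw [snoc_of_lt hi, h i]
    omega
  · simp [snoc_self]
  · rw [snoc_of_gt hi]
    simp only [Option.isSome_none, Bool.false_eq_true, false_iff]
    omega

theorem HasLength.snocEq_snoc (h : HasLength t n) : SnocEq (snoc t n x) t x :=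
  ⟨n, h, fun _ hi => snoc_of_lt hi, snoc_self, hasLength_snoc h⟩

theorem HasLength.prefix_snoc (h : HasLength t n) : SeqPrefix t (snoc t n x) := by
  intro i s hs
  rw [snoc_of_lt (h.lt_of_eq_some hs), hs]

theorem SeqPrefix.prefix_or_prefix_of_prefix_snoc {u : RawSeq S} (hu : IsDownClosed u)
    (h : HasLength t n) (hut : SeqPrefix u (snoc t n x)) : SeqPrefix u t ∨ SeqPrefix t u := by
  by_cases hun : (u n).isSome
  · right
    intro i s hs
    have hi := h.lt_of_eq_some hs
    obtain ⟨y, hy⟩ := Option.isSome_iff_exists.mp (hu.isSome_of_le hi.le hun)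
    rw [hy, ← Option.some.inj ((hut i y hy).symm.trans ((snoc_of_lt hi).trans hs))]
  · left
    intro i s hs
    have hsn := hut i s hs
    rcases lt_trichotomy i n with hi | rfl | hi
    · rwa [snoc_of_lt hi] at hsn
    · simp [hs] at hun
    · simp [snoc_of_gt hi] at hsn

end Snoc

theorem SnocEq.eq_snoc {t' t : RawSeq S} {x : Step S} (h : SnocEq t' t x) :
    ∃ n, HasLength t n ∧ t' = snoc t n x := by
  obtain ⟨n, ht, hlt, hn, ht'⟩ := h
  refine ⟨n, ht, funext fun i => ?_⟩
  rcases lt_trichotomy i n with hi | rfl | hi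
  · rw [snoc_of_lt hi, hlt i hi]
  · rw [snoc_self, hn]
  · rw [snoc_of_gt hi, ht'.eq_none hi]

theorem SnocEq.left_unique {t' t u : RawSeq S} {x y : Step S} (ht : SnocEq t' t x)
    (hu : SnocEq t' u y) : t = u := by
  obtain ⟨n, htn, htlt, -, ht'⟩ := ht
  obtain ⟨m, hum, hult, -, hu'⟩ := hu
  obtain rfl : n = m := by have := ht'.unique hu'; omega
  funext i
  by_cases hi : i < n
  · rw [← htlt i hi, hult i hi]
  · rw [htn.eq_none (not_lt.mp hi), hum.eq_none (not_lt.mp hi)]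

def IsGLBFrom (σ₀ : S) (A : Set (Trace S)) (inf : Trace S) : Prop :=
  inf.init = σ₀ ∧ (∀ tr ∈ A, TrLE inf tr) ∧
    ∀ lb : Trace S, lb.init = σ₀ → (∀ tr ∈ A, TrLE lb tr) → TrLE lb inf

theorem trLE_emptyTrace {tr : Trace S} {σ : S} (hσ : tr.init = σ) : TrLE tr (emptyTrace σ) :=
  ⟨hσ, Or.inl (emptySeq_prefix _)⟩

theorem botTrace_trLE {tr : Trace S} {σ : S} (hσ : tr.init = σ) : TrLE (botTrace σ) tr := by
  have hseq : seq1 (Step.prog none) = snoc (emptySeq S) 0 (Step.prog none) := by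
    funext i
    by_cases hi : i = 0 <;> simp [seq1, snoc, hi]
  refine ⟨hσ.symm, Or.inr ⟨emptySeq S, ?_, emptySeq_prefix _⟩⟩
  show SnocEq (seq1 _) _ _
  rw [hseq]
  exact hasLength_emptySeq.snocEq_snoc

section Chain

open Classical in
/-- The pointwise union of the traces of `A`; on a prefix chain the choice is immaterial. -/
noncomputable def stepsUnion (A : Set (Trace S)) : RawSeq S :=
  fun i => if h : ∃ tr ∈ A, (tr.steps i).isSome then h.choose.steps i else none

variable {A : Set (Trace S)}

theorem exists_of_stepsUnion_eq_some {i : ℕ} {s : Step S} (h : stepsUnion A i = some s) :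
    ∃ tr ∈ A, tr.steps i = some s := by
  unfold stepsUnion at h
  split_ifs at h with hex
  exact ⟨hex.choose, hex.choose_spec.1, h⟩

theorem prefix_stepsUnion (hA : IsChain (fun tr₁ tr₂ : Trace S => SeqPrefix tr₁.steps tr₂.steps) A)
    {tr : Trace S} (htr : tr ∈ A) : SeqPrefix tr.steps (stepsUnion A) := by
  intro i s hs
  have hex : ∃ tr' ∈ A, (tr'.steps i).isSome := ⟨tr, htr, by simp [hs]⟩
  obtain ⟨htr', hi'⟩ := hex.choose_spec
  simp only [stepsUnion, dif_pos hex]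
  rcases eq_or_ne tr hex.choose with heq | hne
  · rw [← heq, hs]
  rcases hA htr htr' hne with h | h
  · exact h i s hs
  · exact eq_some_of_prefix_of_prefix (SeqPrefix.refl _) h hs hi'

theorem exists_isGLBFrom_of_isChain (σ₀ : S) (hA : ∀ tr ∈ A, tr.init = σ₀)
    (hchain : IsChain (fun tr₁ tr₂ : Trace S => SeqPrefix tr₁.steps tr₂.steps) A) :
    ∃ inf, IsGLBFrom σ₀ A inf := by
  have hclosed : IsDownClosed (stepsUnion A) := by
    intro i hi
    obtain ⟨y, hy⟩ := Option.isSome_iff_exists.mp hi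
    obtain ⟨tr, htr, hy⟩ := exists_of_stepsUnion_eq_some hy
    obtain ⟨z, hz⟩ := Option.isSome_iff_exists.mp (tr.closed i (by simp [hy]))
    simp [prefix_stepsUnion hchain htr i z hz]
  have hwf : ∀ i st, stepsUnion A i = some st → st.isTerminal → stepsUnion A (i + 1) = none := by
    intro i st hi hterm
    by_contra! hnext
    obtain ⟨y, hy⟩ := Option.ne_none_iff_exists'.mp hnext
    obtain ⟨tr, htr, hy⟩ := exists_of_stepsUnion_eq_some hy
    -- `tr` reaches step `i + 1`, so it agrees with the union at step `i`, which is terminal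
    have hti : tr.steps i = some st :=
      eq_some_of_prefix_of_prefix (SeqPrefix.refl _) (prefix_stepsUnion hchain htr) hi
        (tr.closed i (by simp [hy]))
    simp [tr.wf i st hti hterm] at hy
  refine ⟨⟨σ₀, stepsUnion A, hclosed, hwf⟩, rfl,
    fun tr htr => ⟨(hA tr htr).symm, Or.inl (prefix_stepsUnion hchain htr)⟩, ?_⟩
  intro lb hlb hlbA
  by_cases hext : ∀ tr ∈ A, SeqPrefix tr.steps lb.steps
  · refine ⟨hlb, Or.inl fun i s hs => ?_⟩
    obtain ⟨tr, htr, hs⟩ := exists_of_stepsUnion_eq_some hs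
    exact hext tr htr i s hs
  · push Not at hext
    obtain ⟨tr, htr, hnot⟩ := hext
    obtain ⟨-, h | ⟨t₃, hsnoc, ht₃⟩⟩ := hlbA tr htr
    · exact absurd h hnot
    · exact ⟨hlb, Or.inr ⟨t₃, hsnoc, ht₃.trans (prefix_stepsUnion hchain htr)⟩⟩

end Chain

section Stem

variable {A : Set (Trace S)}

/-- `t` is a stem of `A` when `t ++ [π(⊥)]` (with `t` of length `n`) is a lower bound of `A`. -/
def IsAbortStem (A : Set (Trace S)) (t : RawSeq S) (n : ℕ) : Prop :=
  HasLength t n ∧ (∀ i st, t i = some st → ¬ st.isTerminal) ∧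
    ∀ tr ∈ A, SeqPrefix t tr.steps ∨ SeqPrefix tr.steps (snoc t n (Step.prog none))

theorem isAbortStem_emptySeq : IsAbortStem A (emptySeq S) 0 :=
  ⟨hasLength_emptySeq, fun i st h => by simp [emptySeq] at h,
    fun _ _ => Or.inl (emptySeq_prefix _)⟩

def IsAbortStem.toTrace {t : RawSeq S} {n : ℕ} (h : IsAbortStem A t n) (σ : S) : Trace S where
  init := σ
  steps := snoc t n (Step.prog none)
  closed := (hasLength_snoc h.1).isDownClosed
  wf i st hi hterm := by
    rcases lt_trichotomy i n with hin | rfl | hin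
    · rw [snoc_of_lt hin] at hi
      exact absurd hterm (h.2.1 i st hi)
    · exact snoc_of_gt (Nat.lt_succ_self _)
    · simp [snoc_of_gt hin] at hi

theorem IsAbortStem.toTrace_trLE {t : RawSeq S} {n : ℕ} (h : IsAbortStem A t n) {tr : Trace S}
    (htr : tr ∈ A) {σ : S} (hσ : tr.init = σ) : TrLE (h.toTrace σ) tr := by
  refine ⟨hσ.symm, ?_⟩
  rcases h.2.2 tr htr with ht | ht
  · exact Or.inr ⟨t, h.1.snocEq_snoc, ht⟩
  · exact Or.inl ht

theorem isAbortStem_of_lowerBound {lb : Trace S} (hlbA : ∀ tr ∈ A, TrLE lb tr) {t : RawSeq S}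
    {n : ℕ} (ht : HasLength t n) (hlb : lb.steps = snoc t n (Step.prog none)) :
    IsAbortStem A t n := by
  refine ⟨ht, fun i st hi hterm => ?_, fun tr htr => ?_⟩
  · have hin := ht.lt_of_eq_some hi
    have hlbi : lb.steps i = some st := by rw [hlb, snoc_of_lt hin, hi]
    have hnext : (lb.steps (i + 1)).isSome := by
      rw [hlb]
      exact (hasLength_snoc ht (i + 1)).mpr (by omega)
    simp [lb.wf i st hlbi hterm] at hnext
  · obtain ⟨-, h | ⟨t₃, hsnoc, ht₃⟩⟩ := hlbA tr htr
    · exact Or.inr (hlb ▸ h)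
    · rw [hlb] at hsnoc
      exact Or.inl (SnocEq.left_unique (ht.snocEq_snoc (x := Step.prog none)) hsnoc ▸ ht₃)

theorem IsAbortStem.comparable {t : RawSeq S} {n : ℕ} (h : IsAbortStem A t n) {tr : Trace S}
    (htr : tr ∈ A) : SeqPrefix t tr.steps ∨ SeqPrefix tr.steps t :=
  (h.2.2 tr htr).elim Or.inl fun hsnoc => (hsnoc.prefix_or_prefix_of_prefix_snoc tr.closed h.1).symm

section Incomparable

variable {tr₁ tr₂ : Trace S}

theorem IsAbortStem.prefix_left {t : RawSeq S} {n : ℕ} (h : IsAbortStem A t n) (h₁ : tr₁ ∈ A)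
    (h₂ : tr₂ ∈ A) (h₁₂ : ¬ SeqPrefix tr₁.steps tr₂.steps)
    (h₂₁ : ¬ SeqPrefix tr₂.steps tr₁.steps) : SeqPrefix t tr₁.steps :=
  prefix_of_comparable_of_not_prefix tr₁.closed tr₂.closed h₁₂ h₂₁ (h.comparable h₁)
    (h.comparable h₂)

theorem exists_maximal_isAbortStem (h₁ : tr₁ ∈ A) (h₂ : tr₂ ∈ A)
    (h₁₂ : ¬ SeqPrefix tr₁.steps tr₂.steps) (h₂₁ : ¬ SeqPrefix tr₂.steps tr₁.steps) :
    ∃ n, (∃ t, IsAbortStem A t n) ∧ ∀ u m, IsAbortStem A u m → m ≤ n := by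
  classical
  obtain ⟨j, s, hj₁, hj₂⟩ : ∃ j s, tr₁.steps j = some s ∧ tr₂.steps j ≠ some s := by
    simpa [SeqPrefix] using h₁₂
  -- stems are common prefixes of `tr₁` and `tr₂`, which differ at step `j`
  have hbound : ∀ t n, IsAbortStem A t n → n ≤ j := by
    intro t n h
    by_contra! hjn
    obtain ⟨x, hx⟩ := h.1.exists_eq_some hjn
    have p₁ := h.prefix_left h₁ h₂ h₁₂ h₂₁
    have p₂ := h.prefix_left h₂ h₁ h₂₁ h₁₂
    exact hj₂ (by rw [p₂ j x hx, ← hj₁, p₁ j x hx])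
  exact ⟨_, Nat.findGreatest_spec (P := fun n => ∃ t, IsAbortStem A t n) (Nat.zero_le j)
      ⟨emptySeq S, isAbortStem_emptySeq⟩,
    fun u m hu => Nat.le_findGreatest (hbound u m hu) ⟨u, hu⟩⟩

theorem exists_snocEq_of_lowerBound {lb : Trace S} (hlbA : ∀ tr ∈ A, TrLE lb tr) (h₁ : tr₁ ∈ A)
    (h₂ : tr₂ ∈ A) (h₁₂ : ¬ SeqPrefix tr₁.steps tr₂.steps)
    (h₂₁ : ¬ SeqPrefix tr₂.steps tr₁.steps) : ∃ t, SnocEq lb.steps t (Step.prog none) := by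
  obtain ⟨-, hp₁ | ⟨t, hs, -⟩⟩ := hlbA tr₁ h₁
  · obtain ⟨-, hp₂ | ⟨t, hs, -⟩⟩ := hlbA tr₂ h₂
    · rcases prefix_or_prefix_of_prefix tr₁.closed tr₂.closed hp₁ hp₂ with h | h
      · exact absurd h h₁₂
      · exact absurd h h₂₁
    · exact ⟨t, hs⟩
  · exact ⟨t, hs⟩

theorem exists_isGLBFrom_of_not_prefix (σ₀ : S) (hA : ∀ tr ∈ A, tr.init = σ₀) (h₁ : tr₁ ∈ A)
    (h₂ : tr₂ ∈ A) (h₁₂ : ¬ SeqPrefix tr₁.steps tr₂.steps)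
    (h₂₁ : ¬ SeqPrefix tr₂.steps tr₁.steps) : ∃ inf, IsGLBFrom σ₀ A inf := by
  obtain ⟨n, ⟨t, ht⟩, hmax⟩ := exists_maximal_isAbortStem h₁ h₂ h₁₂ h₂₁
  refine ⟨ht.toTrace σ₀, rfl, fun tr htr => ht.toTrace_trLE htr (hA tr htr), ?_⟩
  intro lb hlb hlbA
  obtain ⟨t₃, hsnoc⟩ := exists_snocEq_of_lowerBound hlbA h₁ h₂ h₁₂ h₂₁
  obtain ⟨m, hm, hlbsteps⟩ := hsnoc.eq_snoc
  have h₃ := isAbortStem_of_lowerBound hlbA hm hlbsteps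
  have ht₃ : SeqPrefix t₃ t := by
    rcases prefix_or_prefix_of_prefix hm.isDownClosed ht.1.isDownClosed
      (h₃.prefix_left h₁ h₂ h₁₂ h₂₁) (ht.prefix_left h₁ h₂ h₁₂ h₂₁) with h | h
    · exact h
    · exact h.prefix_of_length_le ht.1 hm (hmax _ _ h₃)
  exact ⟨hlb, Or.inr ⟨t₃, hsnoc, ht₃.trans ht.1.prefix_snoc⟩⟩

end Incomparable

end Stem

theorem exists_isGLBFrom (σ₀ : S) (A : Set (Trace S)) (hA : ∀ tr ∈ A, tr.init = σ₀) :
    ∃ inf, IsGLBFrom σ₀ A inf := by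
  by_cases hchain : IsChain (fun tr₁ tr₂ : Trace S => SeqPrefix tr₁.steps tr₂.steps) A
  · exact exists_isGLBFrom_of_isChain σ₀ hA hchain
  · simp only [IsChain, Set.Pairwise, not_forall, not_or] at hchain
    obtain ⟨tr₁, h₁, tr₂, h₂, -, h₁₂, h₂₁⟩ := hchain
    exact exists_isGLBFrom_of_not_prefix σ₀ hA h₁ h₂ h₁₂ h₂₁

end Lattice

/-- For a fixed initial state `σ₀`, the traces starting from `σ₀` form a
complete lattice under trace refinement, with least element `(σ₀,[π(⊥)])`
and greatest element `(σ₀,[])`. -/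
theorem traces_from_state_completeLattice {S : Type} (σ₀ : S) :
    (∀ A : Set (Trace S), (∀ tr ∈ A, tr.init = σ₀) →
      (∃ sup : Trace S, sup.init = σ₀ ∧ (∀ tr ∈ A, TrLE tr sup) ∧
        ∀ ub : Trace S, ub.init = σ₀ → (∀ tr ∈ A, TrLE tr ub) → TrLE sup ub) ∧
      (∃ inf : Trace S, inf.init = σ₀ ∧ (∀ tr ∈ A, TrLE inf tr) ∧
        ∀ lb : Trace S, lb.init = σ₀ → (∀ tr ∈ A, TrLE lb tr) → TrLE lb inf)) ∧
    (∀ tr : Trace S, tr.init = σ₀ → TrLE (botTrace σ₀) tr) ∧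
    (∀ tr : Trace S, tr.init = σ₀ → TrLE tr (emptyTrace σ₀)) := by
  refine ⟨fun A hA => ⟨?_, exists_isGLBFrom σ₀ A hA⟩, fun _ => botTrace_trLE,
    fun _ => trLE_emptyTrace⟩
  obtain ⟨sup, hinit, hle, hgreatest⟩ :=
    exists_isGLBFrom σ₀ {ub | ub.init = σ₀ ∧ ∀ tr ∈ A, TrLE tr ub} fun _ h => h.1
  exact ⟨sup, hinit, fun tr htr => hgreatest tr (hA tr htr) fun ub hub => hub.2 tr htr,
    fun ub hub hubA => hle ub ⟨hub, hubA⟩⟩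

end Aczel
end

section
/- A set of traces s is a command (i.e., prefix closed and abort closed) if and only if it contains the trace (σ, []) for every state σ and is upward closed with respect to the trace refinement ordering ≤. -/
namespace Aczel

/-- A set of traces is a command (prefix closed and abort closed) iff it
contains the empty trace `(σ,[])` for every state `σ` and is upward closed
with respect to the trace refinement ordering. -/
theorem isCommand_iff_empty_and_upclosed {S : Type} (s : Set (Trace S)) :
    IsCommand s ↔
      ((∀ σ : S, emptyTrace σ ∈ s) ∧
        ∀ tr ∈ s, ∀ tr' : Trace S, TrLE tr tr' → tr' ∈ s) := by
  constructor
  · rintro ⟨hpc, hac⟩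
    refine ⟨fun σ => ?_, ?_⟩
    · rw [hpc]; exact Or.inl (Or.inr rfl)
    · rintro tr htr tr' ⟨hinit, hpre | ⟨t₃, hsnoc, hpre⟩⟩
      · rw [hpc]; exact Or.inr ⟨tr, htr, hinit, hpre⟩
      · rw [hac]
        obtain ⟨n, hlen, hagree, hn, hlen'⟩ := hsnoc
        refine Or.inr ⟨⟨tr.init, t₃, ?_, ?_⟩,
          ⟨tr, htr, rfl, n, hlen, hagree, hn, hlen'⟩, hinit, hpre⟩
        · intro i hi
          exact (hlen i).mpr (Nat.lt_of_succ_lt ((hlen (i+1)).mp hi))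
        · intro i st hst hterm
          have hi : i < n := (hlen i).mp (by simp [hst])
          have h1 : tr.steps i = some st := by rw [hagree i hi]; exact hst
          have h2 := tr.wf i st h1 hterm
          have h3 := (hlen' (i+1)).mpr (by omega)
          rw [h2] at h3; simp at h3
  · rintro ⟨hemp, hup⟩
    constructor
    · apply Set.Subset.antisymm
      · intro tr h; exact Or.inl (Or.inl h)
      · rintro tr ((h | h) | ⟨tr', h', hinit, hpre⟩)
        · exact h
        · refine hup (emptyTrace tr.init) (hemp _) tr ⟨rfl, Or.inl ?_⟩
          intro i st hst; rw [h] at hst; exact hst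
        · exact hup tr' h' tr ⟨hinit, Or.inl hpre⟩
    · apply Set.Subset.antisymm
      · intro tr h; exact Or.inl h
      · rintro tr (h | ⟨tr₀, ⟨tr₁, h₁, hinit₁, hsnoc⟩, hinit₀, hpre⟩)
        · exact h
        · exact hup tr₁ h₁ tr ⟨hinit₁.trans hinit₀, Or.inr ⟨tr₀.steps, hsnoc, hpre⟩⟩

end Aczel
end

section
/- Sequential composition distributes over arbitrary nondeterministic choice from the right: (⨅ C) ; d = ⨅ { c ; d | c ∈ C } for any set of commands C and command d. -/
namespace Aczel

private lemma snocEq_ne_empty {S : Type} {t' t : RawSeq S} {x : Step S}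
    (h : SnocEq t' t x) : t' ≠ emptySeq S := by
  rintro rfl
  obtain ⟨n, _, _, hx, _⟩ := h
  simp [emptySeq] at hx

/-- Sequential composition distributes over arbitrary nondeterministic
choice from the right: `(⨅ C) ; d = ⨅ { c ; d | c ∈ C }`. -/
theorem seq_distrib_nondet_right {S : Type} (C : Set (Set (Trace S)))
    (d : Set (Trace S)) (hC : ∀ c ∈ C, IsCommand c) (hd : IsCommand d) :
    seqComp (NondetInf C) d = NondetInf ((fun c => seqComp c d) '' C) := by
  set E : Set (Trace S) := {tr | tr.steps = emptySeq S} with hE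
  -- Right-hand side simplification
  have hR : NondetInf ((fun c => seqComp c d) '' C) = (⋃ c ∈ C, seqComp c d) ∪ E := by
    rw [NondetInf, Set.sUnion_image]; rfl
  -- terminating distributes, and empty traces contribute nothing
  have hterm : terminating (⋃₀ C ∪ E) = ⋃ c ∈ C, terminating c := by
    ext tr
    constructor
    · rintro ⟨tr', htr', hinit, hsnoc⟩
      rcases htr' with ⟨c, hc, htr'⟩ | htr'
      · exact Set.mem_biUnion hc ⟨tr', htr', hinit, hsnoc⟩
      · exact absurd htr' (snocEq_ne_empty hsnoc)
    · intro h
      simp only [Set.mem_iUnion] at h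
      obtain ⟨c, hc, tr', htr', hinit, hsnoc⟩ := h
      exact ⟨tr', Or.inl ⟨c, hc, htr'⟩, hinit, hsnoc⟩
  -- difference with terminated distributes
  have hdiff : (⋃₀ C ∪ E) \ terminated (⋃₀ C ∪ E)
      = (⋃ c ∈ C, c \ terminated c) ∪ E := by
    ext tr
    constructor
    · rintro ⟨hmem, hnt⟩
      rcases hmem with ⟨c, hc, htr⟩ | htr
      · refine Or.inl (Set.mem_biUnion hc ⟨htr, fun h => hnt ⟨Or.inl ⟨c, hc, htr⟩, h.2⟩⟩)
      · exact Or.inr htr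
    · rintro (h | h)
      · simp only [Set.mem_iUnion] at h
        obtain ⟨c, hc, htr, hnt⟩ := h
        exact ⟨Or.inl ⟨c, hc, htr⟩, fun hcontra => hnt ⟨htr, hcontra.2⟩⟩
      · refine ⟨Or.inr h, ?_⟩
        rintro ⟨-, t, hsnoc⟩
        exact snocEq_ne_empty hsnoc h
  -- abortClose distributes over the union with E and over a biUnion
  have habort : abortClose ((⋃ c ∈ C, c \ terminated c) ∪ E)
      = (⋃ c ∈ C, abortClose (c \ terminated c)) ∪ E := by
    ext tr
    constructor
    · rintro (hmem | ⟨tr', ⟨tr'', htr'', hinit'', hsnoc⟩, hinit, hpre⟩)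
      · rcases hmem with h | h
        · simp only [Set.mem_iUnion] at h
          obtain ⟨c, hc, h⟩ := h
          exact Or.inl (Set.mem_biUnion hc (Or.inl h))
        · exact Or.inr h
      · rcases htr'' with h | h
        · simp only [Set.mem_iUnion] at h
          obtain ⟨c, hc, h⟩ := h
          exact Or.inl (Set.mem_biUnion hc
            (Or.inr ⟨tr', ⟨tr'', h, hinit'', hsnoc⟩, hinit, hpre⟩))
        · exact absurd h (snocEq_ne_empty hsnoc)
    · rintro (h | h)
      · simp only [Set.mem_iUnion] at h
        obtain ⟨c, hc, h | ⟨tr', ⟨tr'', htr'', hinit'', hsnoc⟩, hinit, hpre⟩⟩ := h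
        · exact Or.inl (Or.inl (Set.mem_biUnion hc h))
        · exact Or.inr ⟨tr', ⟨tr'', Or.inl (Set.mem_biUnion hc htr''), hinit'', hsnoc⟩,
            hinit, hpre⟩
      · exact Or.inl (Or.inr h)
  -- seqCat distributes over biUnion in first argument
  have hcat : seqCat (⋃ c ∈ C, terminating c) d = ⋃ c ∈ C, seqCat (terminating c) d := by
    ext tr
    constructor
    · rintro ⟨tr₁, h₁, rest⟩
      simp only [Set.mem_iUnion] at h₁ ⊢
      obtain ⟨c, hc, h₁⟩ := h₁
      exact ⟨c, hc, tr₁, h₁, rest⟩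
    · intro h
      simp only [Set.mem_iUnion] at h
      obtain ⟨c, hc, tr₁, h₁, rest⟩ := h
      exact ⟨tr₁, Set.mem_biUnion hc h₁, rest⟩
  have hL : seqComp (NondetInf C) d
      = ((⋃ c ∈ C, abortClose (c \ terminated c)) ∪ E) ∪ (⋃ c ∈ C, seqCat (terminating c) d) := by
    rw [seqComp]
    rw [show NondetInf C = ⋃₀ C ∪ E from rfl]
    rw [hdiff, habort, hterm, hcat]
  rw [hL, hR]
  have : (⋃ c ∈ C, seqComp c d)
      = (⋃ c ∈ C, abortClose (c \ terminated c)) ∪ (⋃ c ∈ C, seqCat (terminating c) d) := by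
    simp only [seqComp, ← Set.iUnion_union_distrib]
  rw [this]
  ext tr
  simp only [Set.mem_union]
  tauto

end Aczel
end

section
/- Weak conjunction of guarantee commands satisfies guar(g₁) ⋒ guar(g₂) = guar(g₁ ∩ g₂), where guar(g) = (π(g) ⊓ ε⊥(⊤))^ω. -/
namespace Aczel

section AuxLemmas
variable {S : Type}

/-- The state at position `i` of a trace. -/
def StateAt (tr : Trace S) (i : ℕ) (σ : S) : Prop :=
  (i = 0 ∧ σ = tr.init) ∨
    ∃ j, i = j + 1 ∧ (tr.steps j = some (Step.prog (some σ)) ∨ tr.steps j = some (Step.env (some σ)))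

/-- Traces all of whose program steps are defined and satisfy `g`. -/
def Gset (g : Set (S × S)) : Set (Trace S) :=
  {tr | ∀ i o, tr.steps i = some (Step.prog o) →
      ∃ σ σ', o = some σ' ∧ StateAt tr i σ ∧ (σ, σ') ∈ g}

lemma stateAt_unique {tr : Trace S} {i : ℕ} {σ τ : S}
    (h1 : StateAt tr i σ) (h2 : StateAt tr i τ) : σ = τ := by
  rcases h1 with ⟨hi, rfl⟩ | ⟨j, rfl, hj⟩
  · rcases h2 with ⟨_, rfl⟩ | ⟨k, hk, _⟩
    · rfl
    · omega
  · rcases h2 with ⟨hi, _⟩ | ⟨k, hk, hk2⟩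
    · omega
    · have hjk : j = k := by omega
      subst hjk
      rcases hj with hj | hj <;> rcases hk2 with hk2 | hk2 <;> rw [hj] at hk2 <;> simp_all

lemma hasLength_unique {t : RawSeq S} {m n : ℕ}
    (h1 : HasLength t m) (h2 : HasLength t n) : m = n := by
  by_contra hne
  rcases Nat.lt_or_ge m n with h | h
  · have hs := (h2 m).mpr h
    have := (h1 m).mp hs
    omega
  · have hlt : n < m := by omega
    have hs := (h1 n).mpr hlt
    have := (h2 n).mp hs
    omega

lemma hasLength_seq1 (a : Step S) : HasLength (seq1 a) 1 := by
  intro i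
  by_cases h : i = 0 <;> simp [seq1, h] <;> omega

lemma hasLength_seq2 (a b : Step S) : HasLength (seq2 a b) 2 := by
  intro i
  match i with
  | 0 => simp [seq2]
  | 1 => simp [seq2]
  | (i+2) => simp [seq2]

lemma eq_none_of_hasLength {t : RawSeq S} {n : ℕ} (h : HasLength t n) {i : ℕ} (hi : n ≤ i) :
    t i = none := by
  cases ht : t i with
  | none => rfl
  | some s =>
    have := (h i).mp (by simp [ht])
    omega

lemma seq1_eq_some {a s : Step S} {i : ℕ} (h : seq1 a i = some s) : i = 0 ∧ s = a := by
  by_cases h0 : i = 0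
  · subst h0
    simp [seq1] at h
    exact ⟨rfl, h.symm⟩
  · simp [seq1, h0] at h

lemma seq2_eq_some {a b s : Step S} {i : ℕ} (h : seq2 a b i = some s) :
    (i = 0 ∧ s = a) ∨ (i = 1 ∧ s = b) := by
  by_cases h0 : i = 0
  · subst h0
    simp [seq2] at h
    exact Or.inl ⟨rfl, h.symm⟩
  · by_cases h1 : i = 1
    · subst h1
      simp [seq2] at h
      exact Or.inr ⟨rfl, h.symm⟩
    · simp [seq2, h0, h1] at h

lemma steps_none {tr : Trace S} {i : ℕ} (h : tr.steps i = none) :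
    ∀ j, i ≤ j → tr.steps j = none := by
  intro j hj
  induction j with
  | zero =>
    have hi0 : i = 0 := by omega
    rw [← hi0]; exact h
  | succ k ih =>
    by_cases hk : i ≤ k
    · have hk0 := ih hk
      cases hsk : tr.steps (k + 1) with
      | none => rfl
      | some s =>
        have := tr.closed k (by simp [hsk])
        rw [hk0] at this
        simp at this
    · have hik : i = k + 1 := by omega
      rw [← hik]; exact h

lemma steps_eq_seq1 {tr : Trace S} {a : Step S} (h0 : tr.steps 0 = some a)
    (h1 : tr.steps 1 = none) : tr.steps = seq1 a := by
  funext i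
  match i with
  | 0 => simp [seq1, h0]
  | (i+1) =>
    have := steps_none h1 (i + 1) (by omega)
    simp [seq1, this]

lemma prefix_seq2 {tr : Trace S} {a b : Step S} (h : SeqPrefix tr.steps (seq2 a b)) :
    tr.steps = emptySeq S ∨ tr.steps = seq1 a ∨ tr.steps = seq2 a b := by
  cases h0 : tr.steps 0 with
  | none =>
    left
    funext i
    simpa [emptySeq] using steps_none h0 i (Nat.zero_le i)
  | some s =>
    have ha := h 0 s h0
    simp [seq2] at ha
    subst ha
    cases h1 : tr.steps 1 with
    | none => exact Or.inr (Or.inl (steps_eq_seq1 h0 h1))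
    | some s' =>
      have hb := h 1 s' h1
      simp [seq2] at hb
      subst hb
      have h2 : tr.steps 2 = none := by
        cases h2 : tr.steps 2 with
        | none => rfl
        | some s'' =>
          have := h 2 s'' h2
          simp [seq2] at this
      refine Or.inr (Or.inr ?_)
      funext i
      match i with
      | 0 => simp [seq2, h0]
      | 1 => simp [seq2, h1]
      | (i+2) =>
        have := steps_none h2 (i + 2) (by omega)
        simp [seq2, this]

/-- Characterization of the traces of `π(g) ⊓ ε⊥(⊤)`. -/
lemma mem_atom_cases {g : Set (S × S)} {tr : Trace S}
    (h : tr ∈ choice (Pi g) (EpsBot (Set.univ : Set (S × S)))) :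
    tr.steps = emptySeq S ∨
      (∃ σ', (tr.init, σ') ∈ g ∧
        (tr.steps = seq1 (Step.prog (some σ')) ∨ tr.steps = seq2 (Step.prog (some σ')) Step.term)) ∨
      (∃ σ', tr.steps = seq1 (Step.env (some σ')) ∨ tr.steps = seq2 (Step.env (some σ')) Step.term) ∨
      tr.steps = seq1 (Step.env none) := by
  simp only [choice, emptyClose, EpsBot, Pi, Eps, EAbortC, prefixClose, Set.mem_union,
    Set.mem_setOf_eq] at h
  rcases h with (((⟨p, hp, hinit, hs⟩ | he) | ⟨tr', ⟨p, hp, hinit, hs⟩, hinit2, hpre⟩) |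
    ((((⟨p, _, hinit, hs⟩ | he) | ⟨tr', ⟨p, _, hinit, hs⟩, hinit2, hpre⟩) | (hs | he)))) | he
  · exact Or.inr (Or.inl ⟨p.2, by rw [hinit, Prod.mk.eta]; exact hp, Or.inr hs⟩)
  · exact Or.inl he
  · rw [hs] at hpre
    have hinit3 : tr.init = p.1 := by rw [← hinit2, hinit]
    have hpg : (tr.init, p.2) ∈ g := by rw [hinit3, Prod.mk.eta]; exact hp
    rcases prefix_seq2 hpre with h' | h' | h'
    · exact Or.inl h'
    · exact Or.inr (Or.inl ⟨p.2, hpg, Or.inl h'⟩)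
    · exact Or.inr (Or.inl ⟨p.2, hpg, Or.inr h'⟩)
  · exact Or.inr (Or.inr (Or.inl ⟨p.2, Or.inr hs⟩))
  · exact Or.inl he
  · rw [hs] at hpre
    rcases prefix_seq2 hpre with h' | h' | h'
    · exact Or.inl h'
    · exact Or.inr (Or.inr (Or.inl ⟨p.2, Or.inl h'⟩))
    · exact Or.inr (Or.inr (Or.inl ⟨p.2, Or.inr h'⟩))
  · exact Or.inr (Or.inr (Or.inr hs))
  · exact Or.inl he
  · exact Or.inl he

lemma atom_prog {g : Set (S × S)} {tr : Trace S}
    (h : tr ∈ choice (Pi g) (EpsBot (Set.univ : Set (S × S)))) {i : ℕ} {o : Option S}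
    (hs : tr.steps i = some (Step.prog o)) :
    i = 0 ∧ ∃ σ', o = some σ' ∧ (tr.init, σ') ∈ g := by
  rcases mem_atom_cases h with hE | ⟨σ', hg, h1 | h1⟩ | ⟨σ', h1 | h1⟩ | h1
  · rw [hE] at hs; simp [emptySeq] at hs
  · rw [h1] at hs
    obtain ⟨hi, hsa⟩ := seq1_eq_some hs
    injection hsa with ho
    exact ⟨hi, σ', ho, hg⟩
  · rw [h1] at hs
    rcases seq2_eq_some hs with ⟨hi, hsa⟩ | ⟨hi, hsa⟩
    · injection hsa with ho
      exact ⟨hi, σ', ho, hg⟩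
    · simp at hsa
  · rw [h1] at hs
    obtain ⟨_, hsa⟩ := seq1_eq_some hs
    simp at hsa
  · rw [h1] at hs
    rcases seq2_eq_some hs with ⟨_, hsa⟩ | ⟨_, hsa⟩ <;> simp at hsa
  · rw [h1] at hs
    obtain ⟨_, hsa⟩ := seq1_eq_some hs
    simp at hsa

/-- Characterization of the terminating traces of the atomic step command. -/
lemma terminating_atom {g : Set (S × S)} {tr₁ : Trace S}
    (h : tr₁ ∈ terminating (choice (Pi g) (EpsBot (Set.univ : Set (S × S))))) :
    (∃ σ', (tr₁.init, σ') ∈ g ∧ tr₁.steps = seq1 (Step.prog (some σ'))) ∨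
      (∃ σ', tr₁.steps = seq1 (Step.env (some σ'))) := by
  obtain ⟨tr', h', hinit, m, hlen1, hagree, hm, hlen'⟩ := h
  rcases mem_atom_cases h' with hE | ⟨σ', hg, h1 | h1⟩ | ⟨σ', h1 | h1⟩ | h1
  · have := (hlen' 0).mpr (by omega)
    rw [hE] at this
    simp [emptySeq] at this
  · rw [h1] at hlen' hm
    have hm1 : m + 1 = 1 := hasLength_unique hlen' (hasLength_seq1 _)
    have hm0 : m = 0 := by omega
    subst hm0
    obtain ⟨_, hc⟩ := seq1_eq_some hm
    simp at hc
  · rw [h1] at hlen' hm hagree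
    have hm2 : m + 1 = 2 := hasLength_unique hlen' (hasLength_seq2 _ _)
    have hm1 : m = 1 := by omega
    subst hm1
    refine Or.inl ⟨σ', by rw [← hinit]; exact hg, ?_⟩
    have h0 : tr₁.steps 0 = some (Step.prog (some σ')) := by
      have := hagree 0 (by omega)
      simp [seq2] at this
      exact this.symm
    funext i
    match i with
    | 0 => simp [seq1, h0]
    | (i+1) =>
      have := eq_none_of_hasLength hlen1 (show 1 ≤ i + 1 by omega)
      simp [seq1, this]
  · rw [h1] at hlen' hm
    have hm1 : m + 1 = 1 := hasLength_unique hlen' (hasLength_seq1 _)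
    have hm0 : m = 0 := by omega
    subst hm0
    obtain ⟨_, hc⟩ := seq1_eq_some hm
    simp at hc
  · rw [h1] at hlen' hm hagree
    have hm2 : m + 1 = 2 := hasLength_unique hlen' (hasLength_seq2 _ _)
    have hm1 : m = 1 := by omega
    subst hm1
    refine Or.inr ⟨σ', ?_⟩
    have h0 : tr₁.steps 0 = some (Step.env (some σ')) := by
      have := hagree 0 (by omega)
      simp [seq2] at this
      exact this.symm
    funext i
    match i with
    | 0 => simp [seq1, h0]
    | (i+1) =>
      have := eq_none_of_hasLength hlen1 (show 1 ≤ i + 1 by omega)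
      simp [seq1, this]
  · rw [h1] at hlen' hm
    have hm1 : m + 1 = 1 := hasLength_unique hlen' (hasLength_seq1 _)
    have hm0 : m = 0 := by omega
    subst hm0
    obtain ⟨_, hc⟩ := seq1_eq_some hm
    simp at hc

end AuxLemmas


section MainLemmas
variable {S : Type}

def shiftTrace (tr : Trace S) (σ : S) : Trace S :=
  ⟨σ, fun i => tr.steps (i + 1), fun i h => tr.closed (i + 1) h,
   fun i st h ht => tr.wf (i + 1) st h ht⟩

lemma shift_mem_Gset {g : Set (S × S)} {tr : Trace S} (h : tr ∈ Gset g) {σ₀ : S}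
    (h0 : tr.steps 0 = some (Step.prog (some σ₀)) ∨ tr.steps 0 = some (Step.env (some σ₀))) :
    shiftTrace tr σ₀ ∈ Gset g := by
  intro j o hj
  obtain ⟨σ, σ', ho, hst, hg⟩ := h (j + 1) o hj
  refine ⟨σ, σ', ho, ?_, hg⟩
  rcases hst with ⟨hc, _⟩ | ⟨k, hk, hkk⟩
  · omega
  · have hkj : k = j := by omega
    subst hkj
    cases k with
    | zero =>
      refine Or.inl ⟨rfl, ?_⟩
      rcases hkk with h' | h' <;> rcases h0 with h0 | h0 <;> rw [h'] at h0 <;> simp at h0 <;>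
        exact h0
    | succ k => exact Or.inr ⟨k, rfl, hkk⟩

def trSeq1 (σ : S) (a : Step S) (ha : ¬ a.isTerminal) : Trace S :=
  ⟨σ, seq1 a, by intro i h; simp [seq1] at h, by
    intro i st h hst
    obtain ⟨rfl, rfl⟩ := seq1_eq_some h
    exact absurd hst ha⟩

def trSeq2T (σ : S) (a : Step S) (ha : ¬ a.isTerminal) : Trace S :=
  ⟨σ, seq2 a Step.term, by
    intro i h
    cases i with
    | zero => simp [seq2]
    | succ k =>
      have hk : k + 1 = 1 := by
        by_contra hc
        simp [seq2, hc, Nat.succ_ne_zero] at h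
      rw [hk]; simp [seq2], by
    intro i st h hst
    rcases seq2_eq_some h with ⟨rfl, rfl⟩ | ⟨rfl, rfl⟩
    · exact absurd hst ha
    · simp [seq2]⟩

/-- `Gset g` is a postfixed point of the iteration functional. -/
lemma gset_postfixed (g : Set (S × S)) :
    Gset g ⊆ choice (NilC S) (seqComp (choice (Pi g) (EpsBot Set.univ)) (Gset g)) := by
  intro tr htr
  simp only [choice, emptyClose, NilC, test, seqComp, Set.mem_union, Set.mem_setOf_eq]
  cases h0 : tr.steps 0 with
  | none =>
    right
    funext i
    exact steps_none h0 i (Nat.zero_le i)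
  | some st =>
    cases st with
    | term =>
      refine Or.inl (Or.inl (Or.inl ⟨trivial, ?_⟩))
      exact steps_eq_seq1 h0 (tr.wf 0 _ h0 trivial)
    | prog o =>
      obtain ⟨σ, σ', rfl, hst, hg⟩ := htr 0 o h0
      have hσ : σ = tr.init := by
        rcases hst with ⟨_, h⟩ | ⟨j, hj, _⟩
        · exact h
        · omega
      subst hσ
      refine Or.inl (Or.inr (Or.inr ?_))
      refine ⟨trSeq1 tr.init (Step.prog (some σ')) (by simp [Step.isTerminal]), ?_,
        shiftTrace tr σ', shift_mem_Gset htr (Or.inl h0), 1, hasLength_seq1 _, ?_, rfl, ?_⟩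
      · refine ⟨trSeq2T tr.init (Step.prog (some σ')) (by simp [Step.isTerminal]),
          ?_, rfl, 1, hasLength_seq1 _, ?_, ?_, ?_⟩
        · exact Or.inl (Or.inl (Or.inl (Or.inl ⟨(tr.init, σ'), hg, rfl, rfl⟩)))
        · intro i hi
          have : i = 0 := by omega
          subst this
          rfl
        · rfl
        · exact hasLength_seq2 _ _
      · exact Or.inr ⟨0, Step.prog (some σ'), hasLength_seq1 _, rfl, Or.inl rfl⟩
      · intro i
        cases i with
        | zero => simp [trSeq1, seq1, h0]
        | succ k => simp [shiftTrace]
    | env o =>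
      cases o with
      | some σ' =>
        refine Or.inl (Or.inr (Or.inr ?_))
        refine ⟨trSeq1 tr.init (Step.env (some σ')) (by simp [Step.isTerminal]), ?_,
          shiftTrace tr σ', shift_mem_Gset htr (Or.inr h0), 1, hasLength_seq1 _, ?_, rfl, ?_⟩
        · refine ⟨trSeq2T tr.init (Step.env (some σ')) (by simp [Step.isTerminal]),
            ?_, rfl, 1, hasLength_seq1 _, ?_, ?_, ?_⟩
          · exact Or.inl (Or.inr (Or.inl (Or.inl (Or.inl ⟨(tr.init, σ'), trivial, rfl, rfl⟩))))
          · intro i hi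
            have : i = 0 := by omega
            subst this
            rfl
          · rfl
          · exact hasLength_seq2 _ _
        · exact Or.inr ⟨0, Step.env (some σ'), hasLength_seq1 _, rfl, Or.inr rfl⟩
        · intro i
          cases i with
          | zero => simp [trSeq1, seq1, h0]
          | succ k => simp [shiftTrace]
      | none =>
        have h1 : tr.steps 1 = none := tr.wf 0 _ h0 trivial
        have hsp : tr.steps = seq1 (Step.env none) := steps_eq_seq1 h0 h1
        refine Or.inl (Or.inr (Or.inl (Or.inl ⟨?_, ?_⟩)))
        · exact Or.inl (Or.inr (Or.inr (Or.inl hsp)))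
        · rintro ⟨_, t, m, _, _, hm, _⟩
          rw [hsp] at hm
          obtain ⟨_, hc⟩ := seq1_eq_some hm
          simp at hc

lemma Gset_sub_guar (g : Set (S × S)) : Gset g ⊆ guarC g := by
  intro tr htr
  exact ⟨Gset g, gset_postfixed g, htr⟩

lemma guar_sub_Gset (g : Set (S × S)) : guarC g ⊆ Gset g := by
  intro tr htr
  obtain ⟨x, hx, htrx⟩ := htr
  suffices H : ∀ i (tr : Trace S), tr ∈ x → ∀ o, tr.steps i = some (Step.prog o) →
      ∃ σ σ', o = some σ' ∧ StateAt tr i σ ∧ (σ, σ') ∈ g by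
    intro i o hio
    exact H i tr htrx o hio
  intro i
  induction i using Nat.strong_induction_on with
  | _ i IH =>
  intro tr htrx o hio
  have hmem := hx htrx
  simp only [choice, emptyClose, NilC, test, seqComp, abortClose, abortComplete, aborting,
    seqCat, Set.mem_union, Set.mem_setOf_eq, Set.mem_diff] at hmem
  rcases hmem with ((⟨_, hs⟩ | hs) | (⟨hc, _⟩ | ⟨tra, ⟨trb, ⟨hb, _⟩, _, m, _, _, hm, _⟩, _, _⟩) |
    hmem) | hs
  · rw [hs] at hio
    obtain ⟨_, hc⟩ := seq1_eq_some hio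
    simp at hc
  · rw [hs] at hio
    simp [emptySeq] at hio
  · -- tr is a trace of the atomic command
    obtain ⟨hi0, σ', ho, hg⟩ := atom_prog (g := g) hc hio
    subst hi0
    exact ⟨tr.init, σ', ho, Or.inl ⟨rfl, rfl⟩, hg⟩
  · -- abort-completed traces: impossible since no atomic trace ends in π(⊥)
    obtain ⟨_, σ', hco, _⟩ := atom_prog (g := g) hb hm
    simp at hco
  · -- seqCat part
    obtain ⟨tr₁, ht1, tr₂, ht2, n, hlen, hlast, hinit, hsteps⟩ := hmem
    rcases terminating_atom (g := g) ht1 with ⟨σ₁, hgσ, hs1⟩ | ⟨σ₁, hs1⟩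
    · -- tr₁ = [π σ₁]
      have hn : n = 1 := hasLength_unique hlen (by rw [hs1]; exact hasLength_seq1 _)
      subst hn
      have h10 : tr₁.steps 0 = some (Step.prog (some σ₁)) := by simp [hs1, seq1]
      have htr20 : tr₂.init = σ₁ := by
        rcases hlast with ⟨hl0, _⟩ | ⟨m, s, hlm, hsm, hdisj⟩
        · have := hasLength_unique hl0 hlen; omega
        · have hm0 : m + 1 = 1 := hasLength_unique hlm hlen
          have : m = 0 := by omega
          subst this
          rw [h10] at hsm
          rcases hdisj with rfl | rfl <;> simp at hsm
          exact hsm.symm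
      cases i with
      | zero =>
        have hts := hsteps 0
        simp [h10] at hts
        rw [hts] at hio
        injection hio with hio'
        injection hio' with ho
        exact ⟨tr.init, σ₁, ho.symm, Or.inl ⟨rfl, rfl⟩, by rw [hinit]; exact hgσ⟩
      | succ k =>
        have hks : tr.steps (k + 1) = tr₂.steps k := by
          have := hsteps (k + 1)
          simpa using this
        rw [hks] at hio
        obtain ⟨σ, σ', ho, hstA, hg2⟩ := IH k (by omega) tr₂ ht2 o hio
        refine ⟨σ, σ', ho, ?_, hg2⟩
        rcases hstA with ⟨hk0, hσi⟩ | ⟨j, hkj, hor⟩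
        · subst hk0
          refine Or.inr ⟨0, rfl, Or.inl ?_⟩
          have hts := hsteps 0
          simp [h10] at hts
          rw [hts, ← htr20, ← hσi]
        · subst hkj
          refine Or.inr ⟨j + 1, rfl, ?_⟩
          have hts : tr.steps (j + 1) = tr₂.steps j := by
            have := hsteps (j + 1)
            simpa using this
          rw [hts]
          exact hor
    · -- tr₁ = [ε σ₁]
      have hn : n = 1 := hasLength_unique hlen (by rw [hs1]; exact hasLength_seq1 _)
      subst hn
      have h10 : tr₁.steps 0 = some (Step.env (some σ₁)) := by simp [hs1, seq1]
      have htr20 : tr₂.init = σ₁ := by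
        rcases hlast with ⟨hl0, _⟩ | ⟨m, s, hlm, hsm, hdisj⟩
        · have := hasLength_unique hl0 hlen; omega
        · have hm0 : m + 1 = 1 := hasLength_unique hlm hlen
          have : m = 0 := by omega
          subst this
          rw [h10] at hsm
          rcases hdisj with rfl | rfl <;> simp at hsm
          exact hsm.symm
      cases i with
      | zero =>
        have hts := hsteps 0
        simp [h10] at hts
        rw [hts] at hio
        simp at hio
      | succ k =>
        have hks : tr.steps (k + 1) = tr₂.steps k := by
          have := hsteps (k + 1)
          simpa using this
        rw [hks] at hio
        obtain ⟨σ, σ', ho, hstA, hg2⟩ := IH k (by omega) tr₂ ht2 o hio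
        refine ⟨σ, σ', ho, ?_, hg2⟩
        rcases hstA with ⟨hk0, hσi⟩ | ⟨j, hkj, hor⟩
        · subst hk0
          refine Or.inr ⟨0, rfl, Or.inr ?_⟩
          have hts := hsteps 0
          simp [h10] at hts
          rw [hts, ← htr20, ← hσi]
        · subst hkj
          refine Or.inr ⟨j + 1, rfl, ?_⟩
          have hts : tr.steps (j + 1) = tr₂.steps j := by
            have := hsteps (j + 1)
            simpa using this
          rw [hts]
          exact hor
  · rw [hs] at hio
    simp [emptySeq] at hio

lemma guar_eq_Gset (g : Set (S × S)) : guarC g = Gset g :=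
  Set.Subset.antisymm (guar_sub_Gset g) (Gset_sub_guar g)

lemma aborting_Gset (g : Set (S × S)) : aborting (Gset g) = ∅ := by
  ext tr
  simp only [aborting, Set.mem_setOf_eq, Set.mem_empty_iff_false, iff_false]
  rintro ⟨tr', h', _, m, _, _, hm, _⟩
  obtain ⟨σ, σ', ho, _, _⟩ := h' m none hm
  simp at ho

lemma abortComplete_empty : abortComplete (∅ : Set (Trace S)) = ∅ := by
  ext tr
  simp [abortComplete]

lemma Gset_inter (g₁ g₂ : Set (S × S)) : Gset g₁ ∩ Gset g₂ = Gset (g₁ ∩ g₂) := by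
  ext tr
  constructor
  · rintro ⟨h1, h2⟩ i o hio
    obtain ⟨σ, σ', ho, hst, hg1⟩ := h1 i o hio
    obtain ⟨τ, τ', ho', hst', hg2⟩ := h2 i o hio
    have hσ : σ = τ := stateAt_unique hst hst'
    have hσ' : σ' = τ' := by
      rw [ho] at ho'
      exact Option.some_injective _ ho'
    subst hσ
    subst hσ'
    exact ⟨σ, σ', ho, hst, hg1, hg2⟩
  · intro h
    constructor
    · intro i o hio
      obtain ⟨σ, σ', ho, hst, hg⟩ := h i o hio
      exact ⟨σ, σ', ho, hst, hg.1⟩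
    · intro i o hio
      obtain ⟨σ, σ', ho, hst, hg⟩ := h i o hio
      exact ⟨σ, σ', ho, hst, hg.2⟩

end MainLemmas

/-- Weak conjunction of guarantees: `guar(g₁) ⋒ guar(g₂) = guar(g₁ ∩ g₂)`. -/
theorem wconj_guar_guar {S : Type} (g₁ g₂ : Set (S × S)) :
    wconj (guarC g₁) (guarC g₂) = guarC (g₁ ∩ g₂) := by
  simp only [wconj, abortFirst, guar_eq_Gset, aborting_Gset, Set.empty_inter,
    abortComplete_empty, Set.inter_empty, Set.union_empty, Gset_inter]

end Aczel
end

section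
/- Weak conjunction is associative, commutative and idempotent, and Abort is an annihilator: c ⋒ Abort = Abort for every command c. -/
namespace Aczel

/-! ### Auxiliary lemmas for the weak conjunction theorem -/

lemma seqPrefix_trans {S : Type} {t₁ t₂ t₃ : RawSeq S}
    (h₁ : SeqPrefix t₁ t₂) (h₂ : SeqPrefix t₂ t₃) : SeqPrefix t₁ t₃ :=
  fun i s h => h₂ i s (h₁ i s h)

lemma mem_of_prefix {S : Type} {c : Set (Trace S)} (hc : IsCommand c) {tr tr' : Trace S}
    (h' : tr' ∈ c) (hinit : tr'.init = tr.init) (hpre : SeqPrefix tr.steps tr'.steps) :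
    tr ∈ c := by
  rw [hc.1]; exact Or.inr ⟨tr', h', hinit, hpre⟩

lemma snoc_prefix {S : Type} {t' t : RawSeq S} {x : Step S} (h : SnocEq t' t x) :
    SeqPrefix t t' := by
  obtain ⟨n, hlen, hagree, _, _⟩ := h
  intro i s hi
  have hin : i < n := (hlen i).mp (by simp [hi])
  rw [hagree i hin]; exact hi

lemma aborting_subset {S : Type} {c : Set (Trace S)} (hc : IsCommand c) :
    aborting c ⊆ c := by
  rintro tr ⟨tr', h', hinit, hsnoc⟩
  exact mem_of_prefix hc h' hinit (snoc_prefix hsnoc)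

lemma abortComplete_mono {S : Type} {s t : Set (Trace S)} (h : s ⊆ t) :
    abortComplete s ⊆ abortComplete t := by
  rintro tr ⟨e, he, hi, hp⟩
  exact ⟨e, h he, hi, hp⟩

lemma abortComplete_aborting_subset {S : Type} {c : Set (Trace S)} (hc : IsCommand c) :
    abortComplete (aborting c) ⊆ c := by
  intro tr h; rw [hc.2]; exact Or.inr h

/-- Steps of a sequence whose snoc-extension is a valid trace contain no terminal step. -/
lemma snoc_noterm {S : Type} {tr' : Trace S} {t : RawSeq S} {x : Step S}
    (h : SnocEq tr'.steps t x) : ∀ i s, t i = some s → ¬ s.isTerminal := by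
  obtain ⟨n, hlen, hagree, hn, hlen'⟩ := h
  intro i s hi hterm
  have hin : i < n := (hlen i).mp (by simp [hi])
  have hs : tr'.steps i = some s := by rw [hagree i hin]; exact hi
  have h0 := tr'.wf i s hs hterm
  have h1 : (tr'.steps (i + 1)).isSome := (hlen' (i + 1)).mpr (by omega)
  rw [h0] at h1; simp at h1

/-- A terminal-free prefix of `t ++ [x]` (with `x` terminal) is a prefix of `t`. -/
lemma prefix_of_prefix_snoc {S : Type} {t₀ t' t : RawSeq S} {x : Step S}
    (hx : x.isTerminal) (hnt : ∀ i s, t₀ i = some s → ¬ s.isTerminal)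
    (hpre : SeqPrefix t₀ t') (hsnoc : SnocEq t' t x) : SeqPrefix t₀ t := by
  obtain ⟨n, hlen, hagree, hn, hlen'⟩ := hsnoc
  intro i s hi
  have h' : t' i = some s := hpre i s hi
  rcases lt_trichotomy i n with h | h | h
  · rw [← hagree i h]; exact h'
  · subst h; rw [hn] at h'
    injection h' with h'; subst h'
    exact absurd hx (hnt i _ hi)
  · exfalso
    have h1 : (t' i).isSome := by simp [h']
    have h2 := (hlen' i).mp h1; omega

lemma emptyTrace_mem {S : Type} {c : Set (Trace S)} (hc : IsCommand c) (σ : S) :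
    emptyTrace σ ∈ c := by
  rw [hc.1]; exact Or.inl (Or.inr rfl)

lemma wconj_comm' {S : Type} (a b : Set (Trace S)) : wconj a b = wconj b a := by
  unfold wconj
  rw [Set.inter_comm a b, Set.union_right_comm]

def AF3 {S : Type} (a b c : Set (Trace S)) : Set (Trace S) :=
  abortComplete (aborting a ∩ (b ∩ c))

def T3 {S : Type} (a b c : Set (Trace S)) : Set (Trace S) :=
  (a ∩ b ∩ c) ∪ AF3 a b c ∪ AF3 b a c ∪ AF3 c a b

lemma T3_rot {S : Type} (a b c : Set (Trace S)) : T3 a b c = T3 c a b := by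
  have h1 : a ∩ b ∩ c = c ∩ a ∩ b := by ext x; simp only [Set.mem_inter_iff]; tauto
  unfold T3 AF3
  rw [h1, Set.inter_comm b c, Set.inter_comm a c]
  ext x
  simp only [Set.mem_union]
  tauto

lemma wconj_triple {S : Type} {c₁ c₂ c₃ : Set (Trace S)}
    (h₁ : IsCommand c₁) (h₂ : IsCommand c₂) (h₃ : IsCommand c₃) :
    wconj (wconj c₁ c₂) c₃ = T3 c₁ c₂ c₃ := by
  apply Set.Subset.antisymm
  · intro tr h
    rcases h with (⟨hA, h3⟩ | h) | h
    · -- tr ∈ (wconj c₁ c₂) ∩ c₃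
      rcases hA with (⟨hA1, hA2⟩ | hA) | hA
      · exact Or.inl (Or.inl (Or.inl ⟨⟨hA1, hA2⟩, h3⟩))
      · -- tr ∈ abortFirst c₁ c₂
        obtain ⟨tr₀, ⟨hab, hc2⟩, hinit, hpre⟩ := hA
        have hc3 : tr₀ ∈ c₃ := mem_of_prefix h₃ h3 hinit.symm hpre
        exact Or.inl (Or.inl (Or.inr ⟨tr₀, ⟨hab, hc2, hc3⟩, hinit, hpre⟩))
      · obtain ⟨tr₀, ⟨hab, hc1⟩, hinit, hpre⟩ := hA
        have hc3 : tr₀ ∈ c₃ := mem_of_prefix h₃ h3 hinit.symm hpre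
        exact Or.inl (Or.inr ⟨tr₀, ⟨hab, hc1, hc3⟩, hinit, hpre⟩)
    · -- tr ∈ abortFirst (wconj c₁ c₂) c₃
      obtain ⟨trm, ⟨⟨tr', hA, hinit', hsnoc⟩, h3⟩, hinit, hpre⟩ := h
      rcases hA with (⟨hA1, hA2⟩ | hA) | hA
      · -- tr' ∈ c₁ ∩ c₂ : trm ∈ ab c₁ ∩ c₂ ∩ c₃
        have hab1 : trm ∈ aborting c₁ := ⟨tr', hA1, hinit', hsnoc⟩
        have hm2 : trm ∈ c₂ := mem_of_prefix h₂ hA2 hinit' (snoc_prefix hsnoc)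
        exact Or.inl (Or.inl (Or.inr ⟨trm, ⟨hab1, hm2, h3⟩, hinit, hpre⟩))
      · -- tr' ∈ abortComplete (aborting c₁ ∩ c₂)
        obtain ⟨tr₀, ⟨hab₀, h₀2⟩, hinit₀, hpre₀⟩ := hA
        have hnt : ∀ i s, tr₀.steps i = some s → ¬ s.isTerminal := by
          obtain ⟨tr₂, _, _, hsnoc₂⟩ := hab₀
          exact snoc_noterm hsnoc₂
        have hpm : SeqPrefix tr₀.steps trm.steps :=
          prefix_of_prefix_snoc (x := Step.prog none) trivial hnt hpre₀ hsnoc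
        have h₀3 : tr₀ ∈ c₃ := mem_of_prefix h₃ h3 (hinit₀.trans hinit').symm hpm
        exact Or.inl (Or.inl (Or.inr ⟨tr₀, ⟨hab₀, h₀2, h₀3⟩,
          hinit₀.trans (hinit'.trans hinit), seqPrefix_trans hpm hpre⟩))
      · obtain ⟨tr₀, ⟨hab₀, h₀1⟩, hinit₀, hpre₀⟩ := hA
        have hnt : ∀ i s, tr₀.steps i = some s → ¬ s.isTerminal := by
          obtain ⟨tr₂, _, _, hsnoc₂⟩ := hab₀
          exact snoc_noterm hsnoc₂
        have hpm : SeqPrefix tr₀.steps trm.steps :=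
          prefix_of_prefix_snoc (x := Step.prog none) trivial hnt hpre₀ hsnoc
        have h₀3 : tr₀ ∈ c₃ := mem_of_prefix h₃ h3 (hinit₀.trans hinit').symm hpm
        exact Or.inl (Or.inr ⟨tr₀, ⟨hab₀, h₀1, h₀3⟩,
          hinit₀.trans (hinit'.trans hinit), seqPrefix_trans hpm hpre⟩)
    · -- tr ∈ abortFirst c₃ (wconj c₁ c₂)
      obtain ⟨trm, ⟨hab3, hA⟩, hinit, hpre⟩ := h
      have hm3 : trm ∈ c₃ := aborting_subset h₃ hab3
      rcases hA with (⟨hA1, hA2⟩ | hA) | hA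
      · exact Or.inr ⟨trm, ⟨hab3, hA1, hA2⟩, hinit, hpre⟩
      · obtain ⟨tr₀, ⟨hab₀, h₀2⟩, hinit₀, hpre₀⟩ := hA
        have h₀3 : tr₀ ∈ c₃ := mem_of_prefix h₃ hm3 hinit₀.symm hpre₀
        exact Or.inl (Or.inl (Or.inr ⟨tr₀, ⟨hab₀, h₀2, h₀3⟩,
          hinit₀.trans hinit, seqPrefix_trans hpre₀ hpre⟩))
      · obtain ⟨tr₀, ⟨hab₀, h₀1⟩, hinit₀, hpre₀⟩ := hA
        have h₀3 : tr₀ ∈ c₃ := mem_of_prefix h₃ hm3 hinit₀.symm hpre₀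
        exact Or.inl (Or.inr ⟨tr₀, ⟨hab₀, h₀1, h₀3⟩,
          hinit₀.trans hinit, seqPrefix_trans hpre₀ hpre⟩)
  · intro tr h
    rcases h with ((⟨⟨hm1, hm2⟩, hm3⟩ | h) | h) | h
    · exact Or.inl (Or.inl ⟨Or.inl (Or.inl ⟨hm1, hm2⟩), hm3⟩)
    · -- AF3 c₁ c₂ c₃
      obtain ⟨tr₀, ⟨hab, hc2, hc3⟩, hinit, hpre⟩ := h
      obtain ⟨tr', h1, hinit', hsnoc⟩ := hab
      have htr' : tr' ∈ wconj c₁ c₂ :=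
        Or.inl (Or.inr ⟨tr₀, ⟨⟨tr', h1, hinit', hsnoc⟩, hc2⟩, hinit'.symm, snoc_prefix hsnoc⟩)
      exact Or.inl (Or.inr ⟨tr₀, ⟨⟨tr', htr', hinit', hsnoc⟩, hc3⟩, hinit, hpre⟩)
    · -- AF3 c₂ c₁ c₃
      obtain ⟨tr₀, ⟨hab, hc1, hc3⟩, hinit, hpre⟩ := h
      obtain ⟨tr', h1, hinit', hsnoc⟩ := hab
      have htr' : tr' ∈ wconj c₁ c₂ :=
        Or.inr ⟨tr₀, ⟨⟨tr', h1, hinit', hsnoc⟩, hc1⟩, hinit'.symm, snoc_prefix hsnoc⟩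
      exact Or.inl (Or.inr ⟨tr₀, ⟨⟨tr', htr', hinit', hsnoc⟩, hc3⟩, hinit, hpre⟩)
    · -- AF3 c₃ c₁ c₂
      obtain ⟨tr₀, ⟨hab, hc1, hc2⟩, hinit, hpre⟩ := h
      exact Or.inr ⟨tr₀, ⟨hab, Or.inl (Or.inl ⟨hc1, hc2⟩)⟩, hinit, hpre⟩

/-- Weak conjunction is associative, commutative and idempotent on commands,
and `Abort` is an annihilator. -/
theorem wconj_assoc_comm_idem_abort {S : Type} :
    (∀ c₁ c₂ c₃ : Set (Trace S), IsCommand c₁ → IsCommand c₂ → IsCommand c₃ →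
      wconj (wconj c₁ c₂) c₃ = wconj c₁ (wconj c₂ c₃)) ∧
    (∀ c₁ c₂ : Set (Trace S), IsCommand c₁ → IsCommand c₂ →
      wconj c₁ c₂ = wconj c₂ c₁) ∧
    (∀ c : Set (Trace S), IsCommand c → wconj c c = c) ∧
    (∀ c : Set (Trace S), IsCommand c → wconj c (AbortC S) = AbortC S) := by
  refine ⟨?_, ?_, ?_, ?_⟩
  · -- associativity
    intro c₁ c₂ c₃ h₁ h₂ h₃
    rw [wconj_triple h₁ h₂ h₃, wconj_comm' c₁ (wconj c₂ c₃), wconj_triple h₂ h₃ h₁,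
      T3_rot c₂ c₃ c₁]
  · -- commutativity
    intro c₁ c₂ _ _
    exact wconj_comm' c₁ c₂
  · -- idempotence
    intro c hc
    apply Set.Subset.antisymm
    · intro tr h
      rcases h with (⟨h, _⟩ | h) | h
      · exact h
      · exact abortComplete_aborting_subset hc (abortComplete_mono Set.inter_subset_left h)
      · exact abortComplete_aborting_subset hc (abortComplete_mono Set.inter_subset_left h)
    · intro tr h
      exact Or.inl (Or.inl ⟨h, h⟩)
  · -- Abort annihilator
    intro c hc
    apply Set.Subset.antisymm
    · intro tr _
      trivial
    · intro tr _
      refine Or.inr ⟨emptyTrace tr.init, ⟨⟨botTrace tr.init, trivial, rfl, ?_⟩,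
        emptyTrace_mem hc tr.init⟩, rfl, ?_⟩
      · refine ⟨0, ?_, ?_, ?_, ?_⟩
        · intro i; simp [emptyTrace, emptySeq]
        · intro i hi; omega
        · simp [botTrace, seq1]
        · intro i
          by_cases h : i = 0 <;> simp [botTrace, seq1, h]
      · intro i s h
        simp [emptyTrace, emptySeq] at h

end Aczel
end
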